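/- arXiv:1712.09334 — 4 statements merged into one kernel-verified Lean document; each statement's English description precedes it below -/
import Mathlib

section
/- There exists a constant C such that for all K > 0 and all nonzero real a, ∫_{-K}^{K} dx / (|x|^{1/2} |a-x|^{1/2}) ≤ C K^{1/2} / |a|^{1/2}. -/
open MeasureTheory

private lemma abs_rpow_split (y : ℝ) :
    |y| ^ (-(1:ℝ)/2) = y ^ (-(1:ℝ)/2) + (-y) ^ (-(1:ℝ)/2) := by
  have hcos : Real.cos (-(1:ℝ)/2 * Real.pi) = 0 := by
    rw [show (-(1:ℝ)/2 * Real.pi) = -(Real.pi/2) by ring, Real.cos_neg, Real.cos_pi_div_two]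
  rcases lt_trichotomy y 0 with h | h | h
  · rw [abs_of_neg h, Real.rpow_def_of_neg h, hcos, mul_zero, zero_add]
  · simp [h, Real.zero_rpow (by norm_num : (-(1:ℝ)/2) ≠ 0)]
  · rw [abs_of_pos h, Real.rpow_def_of_neg (neg_neg_iff_pos.mpr h), hcos, mul_zero, add_zero]

private lemma abs_rpow_intble (c d : ℝ) :
    IntervalIntegrable (fun y : ℝ => |y| ^ (-(1:ℝ)/2)) volume c d := by
  have h1 : IntervalIntegrable (fun y : ℝ => y ^ (-(1:ℝ)/2)) volume c d :=
    intervalIntegral.intervalIntegrable_rpow' (by norm_num)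
  have h2 : IntervalIntegrable (fun y : ℝ => (-y) ^ (-(1:ℝ)/2)) volume c d := by
    simpa using (intervalIntegral.intervalIntegrable_rpow' (r := -(1:ℝ)/2) (by norm_num)
      (a := -c) (b := -d)).comp_sub_left 0
  simpa only [← abs_rpow_split] using h1.add h2

private lemma abs_rpow_integral (c d : ℝ) :
    ∫ y in c..d, |y| ^ (-(1:ℝ)/2)
      = 2 * (Real.sqrt d - Real.sqrt c) + 2 * (Real.sqrt (-c) - Real.sqrt (-d)) := by
  have h1 : IntervalIntegrable (fun y : ℝ => y ^ (-(1:ℝ)/2)) volume c d :=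
    intervalIntegral.intervalIntegrable_rpow' (by norm_num)
  have h2 : IntervalIntegrable (fun y : ℝ => (-y) ^ (-(1:ℝ)/2)) volume c d := by
    simpa using (intervalIntegral.intervalIntegrable_rpow' (r := -(1:ℝ)/2) (by norm_num)
      (a := -c) (b := -d)).comp_sub_left 0
  have key : ∫ y in c..d, |y| ^ (-(1:ℝ)/2)
      = (∫ y in c..d, y ^ (-(1:ℝ)/2)) + ∫ y in c..d, (-y) ^ (-(1:ℝ)/2) := by
    rw [← intervalIntegral.integral_add h1 h2]
    simp only [← abs_rpow_split]
  have e1 : ∫ y in c..d, y ^ (-(1:ℝ)/2) = 2 * (Real.sqrt d - Real.sqrt c) := by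
    rw [_root_.integral_rpow (Or.inl (by norm_num))]
    rw [show (-(1:ℝ)/2 + 1) = 1/2 by norm_num, ← Real.sqrt_eq_rpow, ← Real.sqrt_eq_rpow]
    ring
  have e2 : ∫ y in c..d, (-y) ^ (-(1:ℝ)/2) = 2 * (Real.sqrt (-c) - Real.sqrt (-d)) := by
    rw [intervalIntegral.integral_comp_neg (fun y : ℝ => y ^ (-(1:ℝ)/2)),
      _root_.integral_rpow (Or.inl (by norm_num))]
    rw [show (-(1:ℝ)/2 + 1) = 1/2 by norm_num, ← Real.sqrt_eq_rpow, ← Real.sqrt_eq_rpow]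
    ring
  rw [key, e1, e2]

private lemma sqrt_sub_le {u v : ℝ} (hv : 0 ≤ v) (huv : v ≤ u) :
    Real.sqrt u - Real.sqrt v ≤ Real.sqrt (u - v) := by
  nlinarith [Real.sq_sqrt hv, Real.sq_sqrt (hv.trans huv), Real.sq_sqrt (sub_nonneg.2 huv),
    Real.sqrt_nonneg u, Real.sqrt_nonneg v, Real.sqrt_nonneg (u - v),
    mul_nonneg (Real.sqrt_nonneg (u - v)) (Real.sqrt_nonneg v),
    sq_nonneg (Real.sqrt (u - v) + Real.sqrt v - Real.sqrt u)]

private lemma abs_rpow_integral_le (c d : ℝ) (hcd : c ≤ d) :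
    ∫ y in c..d, |y| ^ (-(1:ℝ)/2) ≤ 4 * Real.sqrt (d - c) := by
  rw [abs_rpow_integral]
  rcases le_total 0 c with hc | hc
  · have h1 : Real.sqrt d - Real.sqrt c ≤ Real.sqrt (d - c) := sqrt_sub_le hc hcd
    have h3 : Real.sqrt (-c) - Real.sqrt (-d) ≤ 0 := by
      have hcc : Real.sqrt (-c) = 0 := Real.sqrt_eq_zero'.mpr (by linarith)
      have : 0 ≤ Real.sqrt (-d) := Real.sqrt_nonneg _
      linarith
    nlinarith [Real.sqrt_nonneg (d - c)]
  · rcases le_total d 0 with hd | hd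
    · have h1 : Real.sqrt (-c) - Real.sqrt (-d) ≤ Real.sqrt (d - c) := by
        have := sqrt_sub_le (u := -c) (v := -d) (by linarith) (by linarith)
        simpa [show -c - -d = d - c by ring] using this
      have h2 : Real.sqrt d = 0 := Real.sqrt_eq_zero'.mpr hd
      have h3 : 0 ≤ Real.sqrt c := Real.sqrt_nonneg _
      nlinarith [Real.sqrt_nonneg (d - c)]
    · have h1 : Real.sqrt d ≤ Real.sqrt (d - c) := Real.sqrt_le_sqrt (by linarith)
      have h2 : Real.sqrt (-c) ≤ Real.sqrt (d - c) := Real.sqrt_le_sqrt (by linarith)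
      have h3 : 0 ≤ Real.sqrt c := Real.sqrt_nonneg _
      have h4 : 0 ≤ Real.sqrt (-d) := Real.sqrt_nonneg _
      linarith

/-- There exists a constant `C` such that for all `K > 0` and all nonzero real `a`,
`∫_{-K}^{K} dx / (|x|^{1/2} |a-x|^{1/2}) ≤ C K^{1/2} / |a|^{1/2}`. -/
theorem stmt_3 :
    ∃ C : ℝ, 0 < C ∧ ∀ K : ℝ, 0 < K → ∀ a : ℝ, a ≠ 0 →
      ∫ x in (-K)..K, (|x| ^ ((1:ℝ)/2) * |a - x| ^ ((1:ℝ)/2))⁻¹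
        ≤ C * K ^ ((1:ℝ)/2) / |a| ^ ((1:ℝ)/2) := by
  refine ⟨16, by norm_num, ?_⟩
  intro K hK a ha
  have erpow : ∀ t : ℝ, 0 ≤ t → t ^ (-(1:ℝ)/2) = (Real.sqrt t)⁻¹ := by
    intro t ht
    rw [show (-(1:ℝ)/2) = -((1:ℝ)/2) by ring, Real.rpow_neg ht, ← Real.sqrt_eq_rpow]
  set f : ℝ → ℝ := fun x => (|x| ^ ((1:ℝ)/2) * |a - x| ^ ((1:ℝ)/2))⁻¹ with hf_def
  set g : ℝ → ℝ := fun x =>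
    Real.sqrt 2 / Real.sqrt |a| * (|x| ^ (-(1:ℝ)/2) + |a - x| ^ (-(1:ℝ)/2)) with hg_def
  have hg1 : IntervalIntegrable (fun x : ℝ => |x| ^ (-(1:ℝ)/2)) volume (-K) K :=
    abs_rpow_intble _ _
  have hg2 : IntervalIntegrable (fun x : ℝ => |a - x| ^ (-(1:ℝ)/2)) volume (-K) K := by
    have h2 := (abs_rpow_intble (a + K) (a - K)).comp_sub_left a
    rw [show a - (a + K) = -K from by ring, show a - (a - K) = K from by ring] at h2
    exact h2
  have hg_int : IntervalIntegrable g volume (-K) K := (hg1.add hg2).const_mul _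
  have hpt : ∀ x : ℝ, x ≠ 0 → x ≠ a → f x ≤ g x := by
    intro x hx0 hxa
    have hx : 0 < |x| := abs_pos.mpr hx0
    have hax : 0 < |a - x| := abs_pos.mpr (sub_ne_zero.mpr (Ne.symm hxa))
    have ha' : 0 < |a| := abs_pos.mpr ha
    have hu : 0 < Real.sqrt |x| := Real.sqrt_pos.mpr hx
    have hv : 0 < Real.sqrt |a - x| := Real.sqrt_pos.mpr hax
    have hs : 0 < Real.sqrt |a| := Real.sqrt_pos.mpr ha'
    have hsum : |a| ≤ |x| + |a - x| := by
      have h := abs_add_le x (a - x)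
      simpa using h
    have huv : Real.sqrt |a| ≤ Real.sqrt |x| + Real.sqrt |a - x| := by
      nlinarith [Real.mul_self_sqrt hx.le, Real.mul_self_sqrt hax.le,
        Real.mul_self_sqrt ha'.le]
    have h12 : (1:ℝ) ≤ Real.sqrt 2 := by
      nlinarith [Real.mul_self_sqrt (by norm_num : (0:ℝ) ≤ 2), Real.sqrt_nonneg 2]
    have key : Real.sqrt |a| ≤ Real.sqrt 2 * (Real.sqrt |x| + Real.sqrt |a - x|) := by
      nlinarith
    simp only [hf_def, hg_def]
    rw [← Real.sqrt_eq_rpow, ← Real.sqrt_eq_rpow, erpow _ hx.le, erpow _ hax.le]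
    have hrhs : Real.sqrt 2 / Real.sqrt |a| * ((Real.sqrt |x|)⁻¹ + (Real.sqrt |a - x|)⁻¹)
        = Real.sqrt 2 * (Real.sqrt |x| + Real.sqrt |a - x|)
          / (Real.sqrt |a| * (Real.sqrt |x| * Real.sqrt |a - x|)) := by
      field_simp
      ring
    rw [hrhs, inv_eq_one_div, div_le_div_iff₀ (by positivity) (by positivity)]
    nlinarith [mul_pos hu hv, mul_le_mul_of_nonneg_right key (mul_pos hu hv).le]
  have hae : f ≤ᵐ[volume] g := by
    have hnull : volume ({0, a} : Set ℝ) = 0 :=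
      ((Set.finite_singleton a).insert 0).measure_zero volume
    have hmem : ∀ᵐ x : ℝ, x ∉ ({0, a} : Set ℝ) := measure_eq_zero_iff_ae_notMem.mp hnull
    filter_upwards [hmem] with x hx
    simp only [Set.mem_insert_iff, Set.mem_singleton_iff, not_or] at hx
    exact hpt x hx.1 hx.2
  have hf_meas : AEStronglyMeasurable f (volume.restrict (Set.uIoc (-K) K)) := by
    apply Measurable.aestronglyMeasurable
    fun_prop
  have hf_int : IntervalIntegrable f volume (-K) K := by
    apply hg_int.mono_fun' hf_meas
    filter_upwards [ae_restrict_of_ae hae] with x hx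
    rw [Real.norm_eq_abs, abs_of_nonneg (by positivity)]
    exact hx
  have step1 : ∫ x in (-K)..K, f x ≤ ∫ x in (-K)..K, g x :=
    intervalIntegral.integral_mono_ae (by linarith) hf_int hg_int hae
  have step2 : ∫ x in (-K)..K, g x
      = Real.sqrt 2 / Real.sqrt |a|
        * ((∫ x in (-K)..K, |x| ^ (-(1:ℝ)/2)) + ∫ x in (-K)..K, |a - x| ^ (-(1:ℝ)/2)) := by
    simp only [hg_def]
    rw [intervalIntegral.integral_const_mul, intervalIntegral.integral_add hg1 hg2]
  have bound1 : ∫ x in (-K)..K, |x| ^ (-(1:ℝ)/2) ≤ 4 * Real.sqrt (2 * K) := by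
    have h := abs_rpow_integral_le (-K) K (by linarith)
    rwa [show K - -K = 2 * K from by ring] at h
  have bound2 : ∫ x in (-K)..K, |a - x| ^ (-(1:ℝ)/2) ≤ 4 * Real.sqrt (2 * K) := by
    rw [intervalIntegral.integral_comp_sub_left (fun y : ℝ => |y| ^ (-(1:ℝ)/2)) a]
    have h := abs_rpow_integral_le (a - K) (a - -K) (by linarith)
    rwa [show a - -K - (a - K) = 2 * K from by ring] at h
  have hs : 0 < Real.sqrt |a| := Real.sqrt_pos.mpr (abs_pos.mpr ha)
  have step3 : Real.sqrt 2 / Real.sqrt |a|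
      * ((∫ x in (-K)..K, |x| ^ (-(1:ℝ)/2)) + ∫ x in (-K)..K, |a - x| ^ (-(1:ℝ)/2))
      ≤ Real.sqrt 2 / Real.sqrt |a| * (8 * Real.sqrt (2 * K)) := by
    apply mul_le_mul_of_nonneg_left (by linarith) (by positivity)
  have step4 : Real.sqrt 2 / Real.sqrt |a| * (8 * Real.sqrt (2 * K))
      = 16 * K ^ ((1:ℝ)/2) / |a| ^ ((1:ℝ)/2) := by
    rw [← Real.sqrt_eq_rpow, ← Real.sqrt_eq_rpow, Real.sqrt_mul (by norm_num : (0:ℝ) ≤ 2) K]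
    have h22 : Real.sqrt 2 * Real.sqrt 2 = 2 := Real.mul_self_sqrt (by norm_num)
    field_simp
    nlinarith [h22, Real.sqrt_nonneg K]
  calc ∫ x in (-K)..K, f x ≤ ∫ x in (-K)..K, g x := step1
    _ = _ := step2
    _ ≤ Real.sqrt 2 / Real.sqrt |a| * (8 * Real.sqrt (2 * K)) := step3
    _ = 16 * K ^ ((1:ℝ)/2) / |a| ^ ((1:ℝ)/2) := step4
end

section
/- For all real ξ₁, ξ₂ with ξ₁ξ₂ ≥ 0, not both zero, and ξ = ξ₁ + ξ₂, the quantity ν₀ := (3ξ₁² + 2ξ₁ξ₂ + 3ξ₂²)/(ξ₁² + ξ₂² + √(ξ²(ξ² − ξ₁ξ₂))) satisfies 1 ≤ ν₀ ≤ 3/2. -/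
/-- For all real `ξ₁, ξ₂` with `ξ₁ξ₂ ≥ 0`, not both zero, and `ξ = ξ₁ + ξ₂`, the
quantity `ν₀ = (3ξ₁² + 2ξ₁ξ₂ + 3ξ₂²)/(ξ₁² + ξ₂² + √(ξ²(ξ² − ξ₁ξ₂)))` satisfies
`1 ≤ ν₀ ≤ 3/2`. -/
theorem stmt_9 (ξ₁ ξ₂ : ℝ) (hsign : 0 ≤ ξ₁ * ξ₂) (hne : ¬(ξ₁ = 0 ∧ ξ₂ = 0)) :
    1 ≤ (3 * ξ₁ ^ 2 + 2 * ξ₁ * ξ₂ + 3 * ξ₂ ^ 2) /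
          (ξ₁ ^ 2 + ξ₂ ^ 2 + Real.sqrt ((ξ₁ + ξ₂) ^ 2 * ((ξ₁ + ξ₂) ^ 2 - ξ₁ * ξ₂)))
    ∧ (3 * ξ₁ ^ 2 + 2 * ξ₁ * ξ₂ + 3 * ξ₂ ^ 2) /
          (ξ₁ ^ 2 + ξ₂ ^ 2 + Real.sqrt ((ξ₁ + ξ₂) ^ 2 * ((ξ₁ + ξ₂) ^ 2 - ξ₁ * ξ₂)))
        ≤ 3 / 2 := by
  set s := Real.sqrt ((ξ₁ + ξ₂) ^ 2 * ((ξ₁ + ξ₂) ^ 2 - ξ₁ * ξ₂)) with hs_def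
  have hp : 0 < ξ₁ ^ 2 + ξ₂ ^ 2 := by
    rcases not_and_or.mp hne with h | h
    · positivity
    · positivity
  have harg : 0 ≤ (ξ₁ + ξ₂) ^ 2 * ((ξ₁ + ξ₂) ^ 2 - ξ₁ * ξ₂) := by nlinarith [sq_nonneg (ξ₁ + ξ₂)]
  have hs0 : 0 ≤ s := Real.sqrt_nonneg _
  have hs2 : s ^ 2 = (ξ₁ + ξ₂) ^ 2 * ((ξ₁ + ξ₂) ^ 2 - ξ₁ * ξ₂) := Real.sq_sqrt harg
  have hD : 0 < ξ₁ ^ 2 + ξ₂ ^ 2 + s := by linarith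
  constructor
  · rw [le_div_iff₀ hD]
    nlinarith [sq_nonneg (s - 2 * (ξ₁ ^ 2 + ξ₂ ^ 2) - 2 * (ξ₁ * ξ₂)), sq_nonneg (ξ₁ + ξ₂), sq_nonneg s]
  · rw [div_le_iff₀ hD]
    nlinarith [sq_nonneg (3 * s - 3 * (ξ₁ ^ 2 + ξ₂ ^ 2) - 4 * (ξ₁ * ξ₂)), sq_nonneg s]
end

section
/- For all real ξ₁, ξ₂ with ξ₁ξ₂ ≤ 0, not both zero, and ξ = ξ₁ + ξ₂, the quantity ν₀ := (3ξ₁² + 2ξ₁ξ₂ + 3ξ₂²)/(ξ₁² + ξ₂² + √(ξ²(ξ² − ξ₁ξ₂))) satisfies 1 ≤ ν₀ ≤ 3. -/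
/-- For all real `ξ₁, ξ₂` with `ξ₁ξ₂ ≤ 0`, not both zero, and `ξ = ξ₁ + ξ₂`, the
quantity `ν₀ = (3ξ₁² + 2ξ₁ξ₂ + 3ξ₂²)/(ξ₁² + ξ₂² + √(ξ²(ξ² − ξ₁ξ₂)))` satisfies
`1 ≤ ν₀ ≤ 3`. -/
theorem stmt_10 (ξ₁ ξ₂ : ℝ) (hsign : ξ₁ * ξ₂ ≤ 0) (hne : ¬(ξ₁ = 0 ∧ ξ₂ = 0)) :
    1 ≤ (3 * ξ₁ ^ 2 + 2 * ξ₁ * ξ₂ + 3 * ξ₂ ^ 2) /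
          (ξ₁ ^ 2 + ξ₂ ^ 2 + Real.sqrt ((ξ₁ + ξ₂) ^ 2 * ((ξ₁ + ξ₂) ^ 2 - ξ₁ * ξ₂)))
    ∧ (3 * ξ₁ ^ 2 + 2 * ξ₁ * ξ₂ + 3 * ξ₂ ^ 2) /
          (ξ₁ ^ 2 + ξ₂ ^ 2 + Real.sqrt ((ξ₁ + ξ₂) ^ 2 * ((ξ₁ + ξ₂) ^ 2 - ξ₁ * ξ₂)))
        ≤ 3 := by
  set s := Real.sqrt ((ξ₁ + ξ₂) ^ 2 * ((ξ₁ + ξ₂) ^ 2 - ξ₁ * ξ₂)) with hs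
  have hq : 0 < ξ₁ ^ 2 + ξ₂ ^ 2 := by
    rcases not_and_or.1 hne with h | h
    · positivity
    · positivity
  have hs0 : 0 ≤ s := Real.sqrt_nonneg _
  have hqp : 0 ≤ ξ₁ ^ 2 + ξ₂ ^ 2 + ξ₁ * ξ₂ := by nlinarith [sq_nonneg (ξ₁ + ξ₂)]
  have hD : 0 < ξ₁ ^ 2 + ξ₂ ^ 2 + s := by linarith
  have hsle : s ≤ 2 * (ξ₁ ^ 2 + ξ₂ ^ 2 + ξ₁ * ξ₂) := by
    have h1 : (ξ₁ + ξ₂) ^ 2 * ((ξ₁ + ξ₂) ^ 2 - ξ₁ * ξ₂)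
        ≤ (2 * (ξ₁ ^ 2 + ξ₂ ^ 2 + ξ₁ * ξ₂)) ^ 2 := by nlinarith [sq_nonneg (ξ₁ - ξ₂)]
    calc s ≤ Real.sqrt ((2 * (ξ₁ ^ 2 + ξ₂ ^ 2 + ξ₁ * ξ₂)) ^ 2) :=
          Real.sqrt_le_sqrt h1
      _ = 2 * (ξ₁ ^ 2 + ξ₂ ^ 2 + ξ₁ * ξ₂) := Real.sqrt_sq (by linarith)
  constructor
  · rw [le_div_iff₀ hD]
    nlinarith
  · rw [div_le_iff₀ hD]
    nlinarith
end

section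
/- Let M(ξ) = 1 for |ξ| < N and M(ξ) = (|ξ|/N)^s for |ξ| ≥ N with s < 0 and N ≥ 1. Then for all real ξ₁, ξ₂ with ξ = ξ₁ + ξ₂, one has M(ξ)/(M(ξ₁)M(ξ₂)) ≤ C (1+|ξ|)^s / ((1+|ξ₁|)^s (1+|ξ₂|)^s) for a constant C depending only on s. -/
private lemma neg_rpow_le {s x y : ℝ} (hs : s < 0) (hx : 0 < x) (hxy : x ≤ y) :
    y ^ s ≤ x ^ s :=
  Real.rpow_le_rpow_of_nonpos hx hxy hs.le

/-- `g(a) ≤ 4^{-s} g(b)` in product form. -/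
private lemma gle {s N a b : ℝ} (hs : s < 0) (hN : 1 ≤ N) (ha : 0 ≤ a) (hb : 0 ≤ b)
    (hab : a ≤ 2 * b) :
    (if a < N then (1:ℝ) else (a / N) ^ s) * (1 + b) ^ s ≤
      (4:ℝ) ^ (-s) * ((if b < N then (1:ℝ) else (b / N) ^ s) * (1 + a) ^ s) := by
  have hN0 : (0:ℝ) < N := lt_of_lt_of_le one_pos hN
  have h4 : ((4:ℝ)) ^ (-s) = ((1:ℝ)/4) ^ s := by
    rw [Real.rpow_neg (by norm_num), one_div, Real.inv_rpow (by norm_num)]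
  rw [h4]
  have h1a : (0:ℝ) < 1 + a := by linarith
  have h1b : (0:ℝ) < 1 + b := by linarith
  by_cases haN : a < N <;> by_cases hbN : b < N <;> simp only [haN, hbN, if_true, if_false,
    one_mul]
  · -- a < N, b < N : (1+b)^s ≤ (1/4)^s * (1+a)^s
    rw [← Real.mul_rpow (by norm_num) h1a.le]
    exact neg_rpow_le hs (by linarith) (by linarith)
  · -- a < N, b ≥ N
    push_neg at hbN
    have hb0 : (0:ℝ) < b := lt_of_lt_of_le hN0 hbN
    have hbase : 1 / 4 * (b / N * (1 + a)) ≤ 1 + b := by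
      have h1 : 1 / 4 * (b / N * (1 + a)) ≤ 1 / 4 * (b / N * (2 * N)) := by
        have h2 : (1:ℝ) + a ≤ 2 * N := by linarith
        have hbN' : (0:ℝ) ≤ b / N := by positivity
        nlinarith
      calc 1 / 4 * (b / N * (1 + a)) ≤ 1 / 4 * (b / N * (2 * N)) := h1
        _ = b / 2 := by field_simp <;> ring
        _ ≤ 1 + b := by linarith
    calc (1 + b) ^ s ≤ (1 / 4 * (b / N * (1 + a))) ^ s :=
          neg_rpow_le hs (by positivity) hbase
      _ = (1/4:ℝ) ^ s * ((b / N) ^ s * (1 + a) ^ s) := by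
          rw [Real.mul_rpow (by norm_num) (by positivity),
            Real.mul_rpow (by positivity) h1a.le]
  · -- a ≥ N, b < N
    push_neg at haN
    have ha0 : (0:ℝ) < a := lt_of_lt_of_le hN0 haN
    have hbase : 1 / 4 * (1 + a) ≤ a / N * (1 + b) := by
      have hbhalf : N / 2 ≤ 1 + b := by linarith
      have h1 : 1 / 4 * (1 + a) ≤ a / 2 := by linarith
      calc 1 / 4 * (1 + a) ≤ a / 2 := h1
        _ = a / N * (N / 2) := by field_simp <;> ring
        _ ≤ a / N * (1 + b) := by
            have : (0:ℝ) ≤ a / N := by positivity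
            nlinarith
    calc (a / N) ^ s * (1 + b) ^ s = (a / N * (1 + b)) ^ s := by
          rw [Real.mul_rpow (by positivity) h1b.le]
      _ ≤ (1 / 4 * (1 + a)) ^ s := neg_rpow_le hs (by positivity) hbase
      _ = (1/4:ℝ) ^ s * (1 + a) ^ s := by rw [Real.mul_rpow (by norm_num) h1a.le]
  · -- a ≥ N, b ≥ N
    push_neg at haN hbN
    have ha0 : (0:ℝ) < a := lt_of_lt_of_le hN0 haN
    have hb0 : (0:ℝ) < b := lt_of_lt_of_le hN0 hbN
    have hbase : 1 / 4 * (b / N * (1 + a)) ≤ a / N * (1 + b) := by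
      have key4 : b * (1 + a) ≤ 4 * (a * (1 + b)) := by nlinarith
      calc 1 / 4 * (b / N * (1 + a)) = (b * (1 + a)) / (4 * N) := by ring
        _ ≤ (4 * (a * (1 + b))) / (4 * N) := by gcongr
        _ = (a * (1 + b)) / N := by
            rw [mul_div_mul_left _ _ (by norm_num : (4:ℝ) ≠ 0)]
        _ = a / N * (1 + b) := (div_mul_eq_mul_div a N (1 + b)).symm
    calc (a / N) ^ s * (1 + b) ^ s = (a / N * (1 + b)) ^ s := by
          rw [Real.mul_rpow (by positivity) h1b.le]
      _ ≤ (1 / 4 * (b / N * (1 + a))) ^ s := neg_rpow_le hs (by positivity) hbase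
      _ = (1/4:ℝ) ^ s * ((b / N) ^ s * (1 + a) ^ s) := by
          rw [Real.mul_rpow (by norm_num) (by positivity),
            Real.mul_rpow (by positivity) h1a.le]

/-- `(1+c)^s ≤ M(c)`. -/
private lemma Mge {s N c : ℝ} (hs : s < 0) (hN : 1 ≤ N) (hc : 0 ≤ c) :
    (1 + c) ^ s ≤ (if c < N then (1:ℝ) else (c / N) ^ s) := by
  have h1c : (0:ℝ) < 1 + c := by linarith
  by_cases hcN : c < N <;> simp only [hcN, if_true, if_false]
  · exact Real.rpow_le_one_of_one_le_of_nonpos (by linarith) hs.le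
  · push_neg at hcN
    have hc0 : (0:ℝ) < c := lt_of_lt_of_le (lt_of_lt_of_le one_pos hN) hcN
    refine neg_rpow_le hs (by positivity) ?_
    rw [div_le_iff₀ (by linarith)]
    nlinarith

private lemma Mpos {s N c : ℝ} (hN : 1 ≤ N) (hc : 0 ≤ c) :
    0 < (if c < N then (1:ℝ) else (c / N) ^ s) := by
  by_cases hcN : c < N <;> simp only [hcN, if_true, if_false]
  · norm_num
  · push_neg at hcN
    have : (0:ℝ) < c / N := by
      have := lt_of_lt_of_le one_pos hN
      have : (0:ℝ) < c := lt_of_lt_of_le (lt_of_lt_of_le one_pos hN) hcN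
      positivity
    positivity

private lemma key (s : ℝ) (hs : s < 0) (N : ℝ) (hN : 1 ≤ N) (ξ₁ ξ₂ : ℝ)
    (hle : |ξ₂| ≤ |ξ₁|) :
    (if |ξ₁ + ξ₂| < N then (1:ℝ) else (|ξ₁ + ξ₂| / N) ^ s) /
        ((if |ξ₁| < N then (1:ℝ) else (|ξ₁| / N) ^ s) *
          (if |ξ₂| < N then (1:ℝ) else (|ξ₂| / N) ^ s))
      ≤ (4:ℝ) ^ (-s) * (1 + |ξ₁ + ξ₂|) ^ s / ((1 + |ξ₁|) ^ s * (1 + |ξ₂|) ^ s) := by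
  set a := |ξ₁ + ξ₂| with hadef
  set b := |ξ₁| with hbdef
  set c := |ξ₂| with hcdef
  have ha : 0 ≤ a := abs_nonneg _
  have hb : 0 ≤ b := abs_nonneg _
  have hc : 0 ≤ c := abs_nonneg _
  have hab : a ≤ 2 * b := by
    calc a ≤ b + c := abs_add_le _ _
      _ ≤ 2 * b := by linarith
  have hMa := Mpos (s := s) hN ha
  have hMb := Mpos (s := s) hN hb
  have hMc := Mpos (s := s) hN hc
  have h1a : (0:ℝ) < (1 + a) ^ s := Real.rpow_pos_of_pos (by linarith) _
  have h1b : (0:ℝ) < (1 + b) ^ s := Real.rpow_pos_of_pos (by linarith) _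
  have h1c : (0:ℝ) < (1 + c) ^ s := Real.rpow_pos_of_pos (by linarith) _
  rw [div_le_div_iff₀ (by positivity) (by positivity)]
  have h1 := gle hs hN ha hb hab
  have h2 := Mge (N := N) hs hN hc
  calc (if a < N then (1:ℝ) else (a / N) ^ s) * ((1 + b) ^ s * (1 + c) ^ s)
      = ((if a < N then (1:ℝ) else (a / N) ^ s) * (1 + b) ^ s) * (1 + c) ^ s := by ring
    _ ≤ ((4:ℝ) ^ (-s) * ((if b < N then (1:ℝ) else (b / N) ^ s) * (1 + a) ^ s)) *
        (if c < N then (1:ℝ) else (c / N) ^ s) := by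
        apply mul_le_mul h1 h2 h1c.le
        positivity
    _ = (4:ℝ) ^ (-s) * (1 + a) ^ s *
        ((if b < N then (1:ℝ) else (b / N) ^ s) *
          (if c < N then (1:ℝ) else (c / N) ^ s)) := by ring

/-- Let `M(ξ) = 1` for `|ξ| < N` and `M(ξ) = (|ξ|/N)^s` for `|ξ| ≥ N` with `s < 0`
and `N ≥ 1`. Then for all real `ξ₁, ξ₂` with `ξ = ξ₁ + ξ₂`,
`M(ξ)/(M(ξ₁)M(ξ₂)) ≤ C ⟨ξ⟩^s / (⟨ξ₁⟩^s ⟨ξ₂⟩^s)` for a constant `C` depending only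
on `s`. -/
theorem stmt_18 (s : ℝ) (hs : s < 0) :
    ∃ C : ℝ, 0 < C ∧ ∀ (N : ℝ), 1 ≤ N → ∀ ξ₁ ξ₂ : ℝ,
      (if |ξ₁ + ξ₂| < N then (1:ℝ) else (|ξ₁ + ξ₂| / N) ^ s) /
          ((if |ξ₁| < N then (1:ℝ) else (|ξ₁| / N) ^ s) *
            (if |ξ₂| < N then (1:ℝ) else (|ξ₂| / N) ^ s))
        ≤ C * (1 + |ξ₁ + ξ₂|) ^ s / ((1 + |ξ₁|) ^ s * (1 + |ξ₂|) ^ s) := by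
  refine ⟨(4:ℝ) ^ (-s), Real.rpow_pos_of_pos (by norm_num) _, fun N hN ξ₁ ξ₂ => ?_⟩
  rcases le_total (|ξ₂|) (|ξ₁|) with h | h
  · exact key s hs N hN ξ₁ ξ₂ h
  · have := key s hs N hN ξ₂ ξ₁ h
    rw [add_comm ξ₂ ξ₁] at this
    calc (if |ξ₁ + ξ₂| < N then (1:ℝ) else (|ξ₁ + ξ₂| / N) ^ s) /
          ((if |ξ₁| < N then (1:ℝ) else (|ξ₁| / N) ^ s) *
            (if |ξ₂| < N then (1:ℝ) else (|ξ₂| / N) ^ s))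
        = (if |ξ₁ + ξ₂| < N then (1:ℝ) else (|ξ₁ + ξ₂| / N) ^ s) /
          ((if |ξ₂| < N then (1:ℝ) else (|ξ₂| / N) ^ s) *
            (if |ξ₁| < N then (1:ℝ) else (|ξ₁| / N) ^ s)) := by rw [mul_comm]
      _ ≤ (4:ℝ) ^ (-s) * (1 + |ξ₁ + ξ₂|) ^ s / ((1 + |ξ₂|) ^ s * (1 + |ξ₁|) ^ s) := this
      _ = (4:ℝ) ^ (-s) * (1 + |ξ₁ + ξ₂|) ^ s / ((1 + |ξ₁|) ^ s * (1 + |ξ₂|) ^ s) := by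
          rw [mul_comm ((1 + |ξ₂|) ^ s)]
end
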